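/- arXiv:2103.14946 — 2 statements merged into one kernel-verified Lean document; each statement's English description precedes it below -/
import Mathlib

section
/- (Representation of type models) For every nonempty type model 𝔐 for Φ, there exists a dependence model M = (O, I, A) such that 𝔐 = {type(s) : s ∈ A}, where type(s) = {ψ ∈ Φ : M, s ⊨ ψ}. -/
namespace LFD

/-- LFD formulas over variables `V` and a relational vocabulary `Pred` with arity map `ar`:
atoms `P x₁…x_n`, negation, conjunction, dependence modalities `𝔻_X φ`,
and dependence atoms `D_X y` (with `X ⊆ V` finite). -/
inductive Formula (V Pred : Type) (ar : Pred → ℕ) : Type where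
  | atom (P : Pred) (x : Fin (ar P) → V)
  | neg (φ : Formula V Pred ar)
  | conj (φ ψ : Formula V Pred ar)
  | dd (X : Finset V) (φ : Formula V Pred ar)
  | dep (X : Finset V) (y : V)

variable {V Pred O : Type} {ar : Pred → ℕ}

/-- The free variables of an LFD formula. -/
def Free [DecidableEq V] : Formula V Pred ar → Finset V
  | .atom _ x => Finset.univ.image x
  | .neg φ => Free φ
  | .conj φ ψ => Free φ ∪ Free ψ
  | .dd X _ => X
  | .dep X _ => X

/-- A dependence model: an interpretation `I` of each predicate symbol as a set of
tuples of objects, together with a set `A` of admissible assignments. -/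
structure DepModel (V Pred : Type) (ar : Pred → ℕ) (O : Type) where
  I : (P : Pred) → Set (Fin (ar P) → O)
  A : Set (V → O)

/-- `s =_X t` : the assignments `s` and `t` agree on all variables in `X`. -/
def agree (X : Set V) (s t : V → O) : Prop := ∀ x ∈ X, s x = t x

/-- Truth of an LFD formula at an assignment in a dependence model. -/
def Sat (M : DepModel V Pred ar O) : Formula V Pred ar → (V → O) → Prop
  | .atom P x, s => (fun i => s (x i)) ∈ M.I P
  | .neg φ, s => ¬ Sat M φ s
  | .conj φ ψ, s => Sat M φ s ∧ Sat M ψ s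
  | .dd X φ, s => ∀ t ∈ M.A, agree (↑X) s t → Sat M φ t
  | .dep X y, s => ∀ t ∈ M.A, agree (↑X) s t → s y = t y

end LFD

namespace LFD

variable {V Pred O : Type} {ar : Pred → ℕ}

/-- All variables occurring in a formula (including those in the subscripts). -/
def vars [DecidableEq V] : Formula V Pred ar → Finset V
  | .atom _ x => Finset.univ.image x
  | .neg φ => vars φ
  | .conj φ ψ => vars φ ∪ vars ψ
  | .dd X φ => X ∪ vars φ
  | .dep X y => insert y X

/-- The set of subformulas of a formula (including the formula itself). -/
def Subf : Formula V Pred ar → Set (Formula V Pred ar)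
  | .atom P x => {Formula.atom P x}
  | .neg φ => insert (Formula.neg φ) (Subf φ)
  | .conj φ ψ => insert (Formula.conj φ ψ) (Subf φ ∪ Subf ψ)
  | .dd X φ => insert (Formula.dd X φ) (Subf φ)
  | .dep X y => {Formula.dep X y}

/-- `V_F`: the set of all variables occurring in the set of formulas `F`. -/
def VF [DecidableEq V] (F : Set (Formula V Pred ar)) : Set V :=
  ⋃ φ ∈ F, ↑(vars φ)

/-- `Φ_F`: add to `F` all dependence atoms `D_X y` for `X, {y} ⊆ V_F`, close under
subformulas, and add one round of negations (leaving explicit negations as they are). -/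
def Phi [DecidableEq V] (F : Set (Formula V Pred ar)) : Set (Formula V Pred ar) :=
  let S : Set (Formula V Pred ar) :=
    (⋃ φ ∈ F, Subf φ) ∪
      {f | ∃ (X : Finset V) (y : V), ↑X ⊆ VF F ∧ y ∈ VF F ∧ f = Formula.dep X y}
  S ∪ {f | ∃ ψ ∈ S, (¬ ∃ θ, ψ = Formula.neg θ) ∧ f = Formula.neg ψ}

/-- The dependence closure of `X` with respect to a set `Sg` of formulas:
`D_X^Sg = {y : D_X y ∈ Sg}`. -/
def depClos (Sg : Set (Formula V Pred ar)) (X : Finset V) : Set V :=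
  {y | Formula.dep X y ∈ Sg}

/-- A Hintikka set for `Φ` (with all formulas mentioned ranging over `Φ` only). -/
structure IsHintikka [DecidableEq V] (Φ : Set (Formula V Pred ar))
    (Sg : Set (Formula V Pred ar)) : Prop where
  subset : Sg ⊆ Φ
  negIff : ∀ ψ, Formula.neg ψ ∈ Φ → (Formula.neg ψ ∈ Sg ↔ ψ ∉ Sg)
  conjIff : ∀ φ ψ, Formula.conj φ ψ ∈ Φ → (Formula.conj φ ψ ∈ Sg ↔ φ ∈ Sg ∧ ψ ∈ Sg)
  ddElim : ∀ (X : Finset V) (ψ : Formula V Pred ar), Formula.dd X ψ ∈ Sg → ψ ∈ Sg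
  proj : ∀ (X : Finset V) (x : V), x ∈ X → Formula.dep X x ∈ Φ → Formula.dep X x ∈ Sg
  trans : ∀ (X Y : Finset V) (z : V), (∀ y ∈ Y, Formula.dep X y ∈ Sg) →
    Formula.dep Y z ∈ Sg → Formula.dep X z ∈ Φ → Formula.dep X z ∈ Sg

/-- `Sg ∼_X Δ` : `Sg` and `Δ` contain the same formulas `ψ ∈ Φ` with
`Free(ψ) ⊆ D_X^Sg`. -/
def simX [DecidableEq V] (Φ Sg Δ : Set (Formula V Pred ar)) (X : Finset V) : Prop :=
  ∀ ψ ∈ Φ, ↑(Free ψ) ⊆ depClos Sg X → (ψ ∈ Sg ↔ ψ ∈ Δ)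

/-- A type model for `Φ`: a family of Hintikka sets for `Φ` satisfying the witness
condition (f) for dependence modalities and the uniformity condition (g) for constants. -/
structure IsTypeModel [DecidableEq V] (Φ : Set (Formula V Pred ar))
    (Mf : Set (Set (Formula V Pred ar))) : Prop where
  hintikka : ∀ Sg ∈ Mf, IsHintikka Φ Sg
  witness : ∀ Sg ∈ Mf, ∀ (X : Finset V) (ψ : Formula V Pred ar),
    Formula.dd X ψ ∈ Φ → Formula.dd X ψ ∉ Sg →
      ∃ Δ ∈ Mf, ψ ∉ Δ ∧ simX Φ Sg Δ X
  constants : ∀ Sg ∈ Mf, ∀ Δ ∈ Mf, simX Φ Sg Δ ∅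

/-- The `Φ`-type of an assignment `s` in a dependence model `M`. -/
def typeOf [DecidableEq V] (Φ : Set (Formula V Pred ar)) (M : DepModel V Pred ar O)
    (s : V → O) : Set (Formula V Pred ar) :=
  {ψ ∈ Φ | Sat M ψ s}

end LFD

open LFD

/-!
Unravel the type model into a tree rooted at a type `S₀`: a node is a finite sequence of moves
`Σ ↦ Δ` with `Σ ∼_X Δ`, labelled by its last type, and at a node each variable `x` denotes the
node where its current object was created; the object survives a move along `∼_X` exactly when
`D_X x` holds before the move. If two nodes agree on `X`, then every variable of `X` survives
all moves below their deepest common ancestor, so those `∼`-steps preserve every formula whose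
free variables lie in `X`, and every `y` with `D_X y` survives them too. With this, the truth lemma
(a node satisfies exactly its label) follows from the Hintikka conditions, the witnesses of (f)
for `𝔻_X`, and a repeated move along `∼_X` for `D_X`; by (g) every type labels a child of the
root.
-/

theorem List.exists_greatest_common_suffix {α : Type*} (l l' : List α) :
    ∃ c, c <:+ l ∧ c <:+ l' ∧ ∀ d, d <:+ l → d <:+ l' → d <:+ c := by
  induction l with
  | nil => exact ⟨[], List.nil_suffix, List.nil_suffix, fun _ hd _ => hd⟩
  | cons a l ih =>
    by_cases h : a :: l <:+ l'
    · exact ⟨a :: l, List.suffix_refl _, h, fun _ hd _ => hd⟩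
    · obtain ⟨c, hcl, hcl', hgreatest⟩ := ih
      refine ⟨c, hcl.trans (List.suffix_cons _ _), hcl', fun d hd hd' => ?_⟩
      rcases List.suffix_cons_iff.mp hd with rfl | hd
      · exact absurd hd' h
      · exact hgreatest d hd hd'

namespace LFD

variable {V Pred : Type} {ar : Pred → ℕ}

theorem mem_Subf_self (φ : Formula V Pred ar) : φ ∈ Subf φ := by
  cases φ <;> simp [Subf]

theorem Subf_subset_of_mem {φ ψ : Formula V Pred ar} (h : ψ ∈ Subf φ) : Subf ψ ⊆ Subf φ := by
  induction φ with
  | atom | dep => rw [Subf, Set.mem_singleton_iff] at h; rw [h]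
  | neg φ ih | dd X φ ih =>
    rcases h with rfl | h
    · exact subset_rfl
    · exact (ih h).trans (Set.subset_insert _ _)
  | conj φ₁ φ₂ ih₁ ih₂ =>
    rcases h with rfl | h | h
    · exact subset_rfl
    · exact (ih₁ h).trans (Set.subset_union_left.trans (Set.subset_insert _ _))
    · exact (ih₂ h).trans (Set.subset_union_right.trans (Set.subset_insert _ _))

section Phi

variable [DecidableEq V]

theorem vars_subset_of_mem_Subf {φ ψ : Formula V Pred ar} (h : ψ ∈ Subf φ) :
    vars ψ ⊆ vars φ := by
  induction φ with
  | atom | dep => rw [Subf, Set.mem_singleton_iff] at h; rw [h]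
  | neg φ ih =>
    rcases h with rfl | h
    · exact subset_rfl
    · exact ih h
  | dd X φ ih =>
    rcases h with rfl | h
    · exact subset_rfl
    · exact (ih h).trans Finset.subset_union_right
  | conj φ₁ φ₂ ih₁ ih₂ =>
    rcases h with rfl | h | h
    · exact subset_rfl
    · exact (ih₁ h).trans Finset.subset_union_left
    · exact (ih₂ h).trans Finset.subset_union_right

/-- The part of `Φ_F` before the round of negations is added. -/
def PhiBase (F : Set (Formula V Pred ar)) : Set (Formula V Pred ar) :=
  (⋃ φ ∈ F, Subf φ) ∪
    {f | ∃ (X : Finset V) (y : V), ↑X ⊆ VF F ∧ y ∈ VF F ∧ f = Formula.dep X y}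

variable {F : Set (Formula V Pred ar)}

theorem mem_Phi_iff {f : Formula V Pred ar} :
    f ∈ Phi F ↔ f ∈ PhiBase F ∨
      ∃ ψ ∈ PhiBase F, (¬ ∃ θ, ψ = Formula.neg θ) ∧ f = Formula.neg ψ :=
  Iff.rfl

theorem PhiBase_subset_Phi : PhiBase F ⊆ Phi F :=
  fun _ h => mem_Phi_iff.mpr (Or.inl h)

theorem mem_PhiBase_of_mem_Subf {φ ψ : Formula V Pred ar} (hφ : φ ∈ PhiBase F)
    (hψ : ψ ∈ Subf φ) : ψ ∈ PhiBase F := by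
  rcases hφ with hφ | ⟨X, y, hX, hy, rfl⟩
  · obtain ⟨χ, hχ, hφχ⟩ := Set.mem_iUnion₂.mp hφ
    exact Or.inl (Set.mem_iUnion₂.mpr ⟨χ, hχ, Subf_subset_of_mem hφχ hψ⟩)
  · rw [Subf, Set.mem_singleton_iff] at hψ
    exact Or.inr ⟨X, y, hX, hy, hψ⟩

theorem vars_subset_VF_of_mem_PhiBase {φ : Formula V Pred ar} (hφ : φ ∈ PhiBase F) :
    ↑(vars φ) ⊆ VF F := by
  rcases hφ with hφ | ⟨X, y, hX, hy, rfl⟩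
  · obtain ⟨χ, hχ, hφχ⟩ := Set.mem_iUnion₂.mp hφ
    exact fun x hx => Set.mem_iUnion₂.mpr ⟨χ, hχ, vars_subset_of_mem_Subf hφχ hx⟩
  · simpa [vars, Set.insert_subset_iff] using ⟨hy, hX⟩

theorem mem_PhiBase_of_mem_Phi {f : Formula V Pred ar} (hf : f ∈ Phi F)
    (hneg : ∀ θ, f ≠ Formula.neg θ) : f ∈ PhiBase F := by
  rcases mem_Phi_iff.mp hf with hf | ⟨ψ, -, -, rfl⟩
  · exact hf
  · exact absurd rfl (hneg ψ)

theorem mem_Phi_of_neg_mem {ψ : Formula V Pred ar} (h : Formula.neg ψ ∈ Phi F) :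
    ψ ∈ Phi F := by
  rcases mem_Phi_iff.mp h with h | ⟨ψ', hψ', -, ⟨⟩⟩
  · exact PhiBase_subset_Phi (mem_PhiBase_of_mem_Subf h (Or.inr (mem_Subf_self ψ)))
  · exact PhiBase_subset_Phi hψ'

theorem mem_Phi_of_conj_mem {φ ψ : Formula V Pred ar} (h : Formula.conj φ ψ ∈ Phi F) :
    φ ∈ Phi F ∧ ψ ∈ Phi F := by
  have h := mem_PhiBase_of_mem_Phi h (by simp)
  exact ⟨PhiBase_subset_Phi (mem_PhiBase_of_mem_Subf h (Or.inr (Or.inl (mem_Subf_self φ)))),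
    PhiBase_subset_Phi (mem_PhiBase_of_mem_Subf h (Or.inr (Or.inr (mem_Subf_self ψ))))⟩

theorem mem_Phi_of_dd_mem {X : Finset V} {ψ : Formula V Pred ar}
    (h : Formula.dd X ψ ∈ Phi F) : ψ ∈ Phi F ∧ ↑X ⊆ VF F := by
  have h := mem_PhiBase_of_mem_Phi h (by simp)
  refine ⟨PhiBase_subset_Phi (mem_PhiBase_of_mem_Subf h (Or.inr (mem_Subf_self ψ))), ?_⟩
  exact fun x hx => vars_subset_VF_of_mem_PhiBase h (Finset.mem_union_left _ hx)

theorem dep_mem_Phi_iff {X : Finset V} {y : V} :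
    Formula.dep X y ∈ Phi F ↔ ↑X ⊆ VF F ∧ y ∈ VF F := by
  refine ⟨fun h => ?_, fun ⟨hX, hy⟩ => PhiBase_subset_Phi (Or.inr ⟨X, y, hX, hy, rfl⟩)⟩
  have h := vars_subset_VF_of_mem_PhiBase (mem_PhiBase_of_mem_Phi h (by simp))
  simpa [vars, Set.insert_subset_iff, and_comm] using h

end Phi

/-- A node of the unravelled type model is the list of moves leading to it from the root,
latest first; the move `(Δ, X)` goes to the type `Δ` along `∼_X`. -/
abbrev Path (V Pred : Type) (ar : Pred → ℕ) := List (Set (Formula V Pred ar) × Finset V)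

def label (S0 : Set (Formula V Pred ar)) : Path V Pred ar → Set (Formula V Pred ar)
  | [] => S0
  | (Δ, _) :: _ => Δ

open Classical in
/-- The node at which the object of `x` at `l` was created. -/
noncomputable def origin (S0 : Set (Formula V Pred ar)) : Path V Pred ar → V → Path V Pred ar
  | [], _ => []
  | (Δ, X) :: l, x =>
    if Formula.dep X x ∈ label S0 l then origin S0 l x else (Δ, X) :: l

/-- Tagging objects with their variable keeps the objects of distinct variables apart. -/
noncomputable def nodeAsg (S0 : Set (Formula V Pred ar)) (l : Path V Pred ar) (x : V) :
    Path V Pred ar × V :=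
  (origin S0 l x, x)

variable {S0 : Set (Formula V Pred ar)} {l c : Path V Pred ar}

theorem origin_suffix (S0 : Set (Formula V Pred ar)) (l : Path V Pred ar) (x : V) :
    origin S0 l x <:+ l := by
  induction l with
  | nil => exact List.suffix_refl _
  | cons m l ih =>
    obtain ⟨Δ, X⟩ := m
    rw [origin]
    split_ifs
    · exact ih.trans (List.suffix_cons _ _)
    · exact List.suffix_refl _

theorem origin_ne_cons (S0 : Set (Formula V Pred ar)) (m : Set (Formula V Pred ar) × Finset V)
    (l : Path V Pred ar) (x : V) :
    origin S0 l x ≠ m :: l := by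
  intro h
  simpa [h] using (origin_suffix S0 l x).length_le

theorem origin_cons_of_mem {Δ : Set (Formula V Pred ar)} {X : Finset V} {x : V} (h : Formula.dep X x ∈ label S0 l) :
    origin S0 ((Δ, X) :: l) x = origin S0 l x := by
  rw [origin, if_pos h]

theorem origin_cons_of_not_mem {Δ : Set (Formula V Pred ar)} {X : Finset V} {x : V} (h : Formula.dep X x ∉ label S0 l) :
    origin S0 ((Δ, X) :: l) x = (Δ, X) :: l := by
  rw [origin, if_neg h]

theorem origin_of_suffix {x : V} (hc : c <:+ l) (h : origin S0 l x <:+ c) :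
    origin S0 c x = origin S0 l x := by
  induction l with
  | nil => rw [List.suffix_nil.mp hc]
  | cons m l ih =>
    obtain ⟨Δ, X⟩ := m
    rcases List.suffix_cons_iff.mp hc with rfl | hc
    · rfl
    by_cases hx : Formula.dep X x ∈ label S0 l
    · rw [origin_cons_of_mem hx] at h ⊢
      exact ih hc h
    · rw [origin_cons_of_not_mem hx] at h
      simpa using (h.trans hc).length_le

theorem origin_eq_of_greatest_common_suffix {l' : Path V Pred ar} {x : V}
    (hcl : c <:+ l) (hcl' : c <:+ l') (hgreatest : ∀ d, d <:+ l → d <:+ l' → d <:+ c)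
    (h : origin S0 l x = origin S0 l' x) :
    origin S0 l x = origin S0 c x ∧ origin S0 l' x = origin S0 c x := by
  have hc : origin S0 l x <:+ c :=
    hgreatest _ (origin_suffix S0 l x) (h ▸ origin_suffix S0 l' x)
  exact ⟨(origin_of_suffix hcl hc).symm, (origin_of_suffix hcl' (h ▸ hc)).symm⟩

theorem origin_cons_eq_origin {Δ : Set (Formula V Pred ar)} {X : Finset V} {x : V} (hc : c <:+ l)
    (h : origin S0 ((Δ, X) :: l) x = origin S0 c x) :
    Formula.dep X x ∈ label S0 l ∧ origin S0 l x = origin S0 c x := by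
  by_cases hx : Formula.dep X x ∈ label S0 l
  · rw [origin_cons_of_mem hx] at h
    exact ⟨hx, h⟩
  · rw [origin_cons_of_not_mem hx] at h
    simpa [← h] using ((origin_suffix S0 c x).trans hc).length_le

theorem agree_nodeAsg_iff {X : Set V} {l' : Path V Pred ar} :
    agree X (nodeAsg S0 l) (nodeAsg S0 l') ↔ ∀ x ∈ X, origin S0 l x = origin S0 l' x := by
  simp [agree, nodeAsg]

theorem agree_nodeAsg_cons {Δ : Set (Formula V Pred ar)} {X : Finset V}
    (hX : ∀ x ∈ X, Formula.dep X x ∈ label S0 l) :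
    agree ↑X (nodeAsg S0 l) (nodeAsg S0 ((Δ, X) :: l)) :=
  agree_nodeAsg_iff.mpr fun x hx => (origin_cons_of_mem (hX x hx)).symm

variable [DecidableEq V] {F : Set (Formula V Pred ar)} {Mf : Set (Set (Formula V Pred ar))}

def IsNode (F : Set (Formula V Pred ar)) (Mf : Set (Set (Formula V Pred ar)))
    (S0 : Set (Formula V Pred ar)) : Path V Pred ar → Prop
  | [] => True
  | (Δ, X) :: l => IsNode F Mf S0 l ∧ Δ ∈ Mf ∧ ↑X ⊆ VF F ∧ simX (Phi F) (label S0 l) Δ X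

noncomputable def treeModel (F : Set (Formula V Pred ar)) (Mf : Set (Set (Formula V Pred ar)))
    (S0 : Set (Formula V Pred ar)) : DepModel V Pred ar (Path V Pred ar × V) where
  I P := {o | ∃ l x, IsNode F Mf S0 l ∧ Formula.atom P x ∈ label S0 l ∧
    (fun i => nodeAsg S0 l (x i)) = o}
  A := nodeAsg S0 '' {l | IsNode F Mf S0 l}

theorem label_mem (hS0 : S0 ∈ Mf) (hl : IsNode F Mf S0 l) : label S0 l ∈ Mf := by
  match l, hl with
  | [], _ => exact hS0
  | (_, _) :: _, hl => exact hl.2.1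

theorem mem_label_iff_of_suffix {φ : Formula V Pred ar} (hl : IsNode F Mf S0 l) (hc : c <:+ l)
    (hφ : φ ∈ Phi F) (h : ∀ x ∈ Free φ, origin S0 l x = origin S0 c x) :
    φ ∈ label S0 l ↔ φ ∈ label S0 c := by
  induction l with
  | nil => rw [List.suffix_nil.mp hc]
  | cons m l ih =>
    obtain ⟨Δ, X⟩ := m
    rcases List.suffix_cons_iff.mp hc with rfl | hc
    · rfl
    have hstep x (hx : x ∈ Free φ) := origin_cons_eq_origin hc (h x hx)
    have hsim : φ ∈ label S0 l ↔ φ ∈ Δ := hl.2.2.2 φ hφ fun x hx => (hstep x hx).1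
    exact hsim.symm.trans (ih hl.1 hc fun x hx => (hstep x hx).2)

theorem origin_eq_of_dep_mem_label (hMf : IsTypeModel (Phi F) Mf) (hS0 : S0 ∈ Mf)
    {X : Finset V} {y : V} (hl : IsNode F Mf S0 l) (hc : c <:+ l)
    (hdep : Formula.dep X y ∈ Phi F) (hmem : Formula.dep X y ∈ label S0 c)
    (h : ∀ x ∈ X, origin S0 l x = origin S0 c x) : origin S0 l y = origin S0 c y := by
  induction l with
  | nil => rw [List.suffix_nil.mp hc]
  | cons m l ih =>
    obtain ⟨Δ, Y⟩ := m
    rcases List.suffix_cons_iff.mp hc with rfl | hc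
    · rfl
    have hstep x (hx : x ∈ X) := origin_cons_eq_origin hc (h x hx)
    have hXl : Formula.dep X y ∈ label S0 l :=
      (mem_label_iff_of_suffix hl.1 hc hdep fun x hx => (hstep x hx).2).mpr hmem
    have hYy : Formula.dep Y y ∈ label S0 l :=
      (hMf.hintikka _ (label_mem hS0 hl.1)).trans Y X y (fun x hx => (hstep x hx).1) hXl
        (dep_mem_Phi_iff.mpr ⟨hl.2.2.1, (dep_mem_Phi_iff.mp hdep).2⟩)
    rw [origin_cons_of_mem hYy]
    exact ih hl.1 hc fun x hx => (hstep x hx).2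

theorem mem_label_iff_of_agree {l' : Path V Pred ar} {φ : Formula V Pred ar}
    (hl : IsNode F Mf S0 l) (hl' : IsNode F Mf S0 l') (hφ : φ ∈ Phi F)
    (h : agree ↑(Free φ) (nodeAsg S0 l) (nodeAsg S0 l')) :
    φ ∈ label S0 l ↔ φ ∈ label S0 l' := by
  obtain ⟨c, hcl, hcl', hgreatest⟩ := List.exists_greatest_common_suffix l l'
  have hc x (hx : x ∈ Free φ) :=
    origin_eq_of_greatest_common_suffix hcl hcl' hgreatest (agree_nodeAsg_iff.mp h x hx)
  exact (mem_label_iff_of_suffix hl hcl hφ fun x hx => (hc x hx).1).trans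
    (mem_label_iff_of_suffix hl' hcl' hφ fun x hx => (hc x hx).2).symm

theorem nodeAsg_eq_of_agree (hMf : IsTypeModel (Phi F) Mf) (hS0 : S0 ∈ Mf)
    {l' : Path V Pred ar} {X : Finset V} {y : V}
    (hl : IsNode F Mf S0 l) (hl' : IsNode F Mf S0 l') (hdep : Formula.dep X y ∈ Phi F)
    (hmem : Formula.dep X y ∈ label S0 l) (h : agree ↑X (nodeAsg S0 l) (nodeAsg S0 l')) :
    nodeAsg S0 l y = nodeAsg S0 l' y := by
  obtain ⟨c, hcl, hcl', hgreatest⟩ := List.exists_greatest_common_suffix l l'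
  have hc x (hx : x ∈ X) :=
    origin_eq_of_greatest_common_suffix hcl hcl' hgreatest (agree_nodeAsg_iff.mp h x hx)
  have hmemc : Formula.dep X y ∈ label S0 c :=
    (mem_label_iff_of_suffix hl hcl hdep fun x hx => (hc x hx).1).mp hmem
  simp only [nodeAsg,
    origin_eq_of_dep_mem_label hMf hS0 hl hcl hdep hmemc fun x hx => (hc x hx).1,
    origin_eq_of_dep_mem_label hMf hS0 hl' hcl' hdep hmemc fun x hx => (hc x hx).2]

theorem dep_mem_label_of_mem (hMf : IsTypeModel (Phi F) Mf) (hS0 : S0 ∈ Mf)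
    {X : Finset V} {x : V} (hl : IsNode F Mf S0 l) (hX : ↑X ⊆ VF F) (hx : x ∈ X) :
    Formula.dep X x ∈ label S0 l :=
  (hMf.hintikka _ (label_mem hS0 hl)).proj X x hx (dep_mem_Phi_iff.mpr ⟨hX, hX hx⟩)

theorem sat_treeModel_iff (hMf : IsTypeModel (Phi F) Mf) (hS0 : S0 ∈ Mf)
    {φ : Formula V Pred ar} (hφ : φ ∈ Phi F) (hl : IsNode F Mf S0 l) :
    Sat (treeModel F Mf S0) φ (nodeAsg S0 l) ↔ φ ∈ label S0 l := by
  induction φ generalizing l with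
  | atom P x =>
    refine ⟨fun ⟨l', x', hl', hmem, heq⟩ => ?_, fun hmem => ⟨l, x, hl, hmem, rfl⟩⟩
    obtain rfl : x' = x := funext fun i => congrArg Prod.snd (congrFun heq i)
    refine (mem_label_iff_of_agree hl' hl hφ ?_).mp hmem
    rw [Free, Finset.coe_image]
    rintro _ ⟨i, -, rfl⟩
    exact congrFun heq i
  | neg ψ ih =>
    exact (not_congr (ih (mem_Phi_of_neg_mem hφ) hl)).trans
      ((hMf.hintikka _ (label_mem hS0 hl)).negIff ψ hφ).symm
  | conj φ ψ ihφ ihψ =>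
    obtain ⟨hφ', hψ'⟩ := mem_Phi_of_conj_mem hφ
    exact (and_congr (ihφ hφ' hl) (ihψ hψ' hl)).trans
      ((hMf.hintikka _ (label_mem hS0 hl)).conjIff φ ψ hφ).symm
  | dd X ψ ih =>
    obtain ⟨hψ, hX⟩ := mem_Phi_of_dd_mem hφ
    constructor
    · intro hsat
      by_contra hnot
      obtain ⟨Δ, hΔ, hψΔ, hsim⟩ := hMf.witness _ (label_mem hS0 hl) X ψ hφ hnot
      have hchild : IsNode F Mf S0 ((Δ, X) :: l) := ⟨hl, hΔ, hX, hsim⟩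
      refine hψΔ ((ih hψ hchild).mp (hsat _ ⟨_, hchild, rfl⟩ (agree_nodeAsg_cons ?_)))
      exact fun x hx => dep_mem_label_of_mem hMf hS0 hl hX hx
    · rintro hmem _ ⟨l', hl', rfl⟩ hagree
      have hmem' := (mem_label_iff_of_agree hl hl' hφ hagree).mp hmem
      exact (ih hψ hl').mpr ((hMf.hintikka _ (label_mem hS0 hl')).ddElim X ψ hmem')
  | dep X y =>
    constructor
    · intro hsat
      by_contra hnot
      have hX := (dep_mem_Phi_iff.mp hφ).1
      -- Restarting with the same type along `∼_X` gives `y` a fresh object.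
      have hchild : IsNode F Mf S0 ((label S0 l, X) :: l) := ⟨hl, label_mem hS0 hl, hX,
        fun _ _ _ => Iff.rfl⟩
      have hy := hsat _ ⟨_, hchild, rfl⟩
        (agree_nodeAsg_cons fun x hx => dep_mem_label_of_mem hMf hS0 hl hX hx)
      exact origin_ne_cons S0 _ l y (by simpa [nodeAsg, origin_cons_of_not_mem hnot] using hy)
    · rintro hmem _ ⟨l', hl', rfl⟩ hagree
      exact nodeAsg_eq_of_agree hMf hS0 hl hl' hφ hmem hagree

theorem typeOf_treeModel (hMf : IsTypeModel (Phi F) Mf) (hS0 : S0 ∈ Mf)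
    (hl : IsNode F Mf S0 l) : typeOf (Phi F) (treeModel F Mf S0) (nodeAsg S0 l) = label S0 l := by
  ext ψ
  refine ⟨fun ⟨hψ, hsat⟩ => (sat_treeModel_iff hMf hS0 hψ hl).mp hsat, fun hmem => ?_⟩
  have hψ := (hMf.hintikka _ (label_mem hS0 hl)).subset hmem
  exact ⟨hψ, (sat_treeModel_iff hMf hS0 hψ hl).mpr hmem⟩

end LFD

theorem stmt11_general {V Pred : Type} [DecidableEq V] {ar : Pred → ℕ}
    (F : Set (Formula V Pred ar))
    (Mf : Set (Set (Formula V Pred ar)))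
    (hMf : IsTypeModel (Phi F) Mf) (hne : Mf.Nonempty) :
    ∃ (O : Type) (M : DepModel V Pred ar O),
      Mf = {T | ∃ s ∈ M.A, T = typeOf (Phi F) M s} := by
  obtain ⟨S0, hS0⟩ := hne
  refine ⟨_, treeModel F Mf S0, Set.Subset.antisymm (fun T hT => ?_) ?_⟩
  · -- Every type is one `∼_∅` step away from the root.
    have hnode : IsNode F Mf S0 [(T, ∅)] := ⟨trivial, hT, by simp, hMf.constants S0 hS0 T hT⟩
    exact ⟨_, ⟨_, hnode, rfl⟩, (typeOf_treeModel hMf hS0 hnode).symm⟩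
  · rintro _ ⟨_, ⟨l, hl, rfl⟩, rfl⟩
    rw [typeOf_treeModel hMf hS0 hl]
    exact label_mem hS0 hl

/-- Representation of type models: for every nonempty type model `Mf` for `Φ_F`, there
is a dependence model `M = (O, I, A)` such that `Mf` is exactly the set of `Φ_F`-types
realized at the admissible assignments of `M`. -/
theorem stmt11 {V Pred : Type} [DecidableEq V] {ar : Pred → ℕ}
    (F : Set (Formula V Pred ar)) (hF : F.Finite)
    (Mf : Set (Set (Formula V Pred ar)))
    (hMf : IsTypeModel (Phi F) Mf) (hne : Mf.Nonempty) :
    ∃ (O : Type) (M : DepModel V Pred ar O),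
      Mf = {T | ∃ s ∈ M.A, T = typeOf (Phi F) M s} :=
  stmt11_general F Mf hMf hne
end

section
/- (Frame correspondence for Stepwise) Let V = {x, y, z} be a set of three distinct variables and assume the vocabulary contains at least one ternary predicate symbol. A dependence frame (O, A) (with A ⊆ (V → O)) makes the Stepwise axiom schema ◇_{X∩Y} φ → ◇_X ◇_Y φ true — i.e., every instance (for all X, Y ⊆ V and all LFD formulas φ) is true at every assignment in A under every interpretation of the predicate symbols — if and only if A is a full Cartesian product of the value ranges of the variables: for all s, t, u ∈ A there exists v ∈ A with v(x) = s(x), v(y) = t(y) and v(z) = u(z). -/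
namespace LFD

variable {V Pred O : Type} {ar : Pred → ℕ}

/-- Material implication `φ → ψ`, defined classically as `¬(φ ∧ ¬ψ)`. -/
def impl (φ ψ : Formula V Pred ar) : Formula V Pred ar :=
  Formula.neg (Formula.conj φ (Formula.neg ψ))

/-- The existential dependence modality `◇_X φ := ¬𝔻_X ¬φ`. -/
def diam (X : Finset V) (φ : Formula V Pred ar) : Formula V Pred ar :=
  Formula.neg (Formula.dd X (Formula.neg φ))

/-!
Stepwise `◇_{X∩Y} φ → ◇_X ◇_Y φ` corresponds to the merge condition: whenever `p, q ∈ A`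
agree on `X ∩ Y`, some `v ∈ A` agrees with `p` on `X` and with `q` on `Y`. Soundness is
immediate; conversely, a ternary atom `P x y z` interpreted as the single tuple
`(q x, q y, q z)` holds exactly at `q`, so the instance of Stepwise for this atom at `p`
produces the merge. On three variables, merging along `{x} | {y, z}` and then along
`{x, y} | {z}` yields the product condition, and the product condition lets one patch `p`
on `X` with `q` off `X` into an admissible assignment.
-/

open Function

def HasStepwiseMerge [DecidableEq V] (A : Set (V → O)) : Prop :=
  ∀ X Y : Finset V, ∀ p ∈ A, ∀ q ∈ A, agree ↑(X ∩ Y) p q →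
    ∃ v ∈ A, agree ↑X p v ∧ agree ↑Y v q

/-- `A` is the full Cartesian product of its projections. -/
def IsPatchClosed (A : Set (V → O)) : Prop :=
  ∀ c : V → V → O, (∀ a, c a ∈ A) → (fun a => c a a) ∈ A

theorem sat_impl (M : DepModel V Pred ar O) (φ ψ : Formula V Pred ar) (s : V → O) :
    Sat M (impl φ ψ) s ↔ (Sat M φ s → Sat M ψ s) := by
  simp only [impl, Sat]
  tauto

theorem sat_diam (M : DepModel V Pred ar O) (X : Finset V) (φ : Formula V Pred ar)
    (s : V → O) : Sat M (diam X φ) s ↔ ∃ t ∈ M.A, agree ↑X s t ∧ Sat M φ t := by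
  simp [diam, Sat]

theorem exists_interp_sat_atom_iff_eq {P : Pred} {vars : Fin (ar P) → V}
    (hvars : Surjective vars) (q : V → O) :
    ∃ I : (Q : Pred) → Set (Fin (ar Q) → O),
      ∀ (A : Set (V → O)) (w : V → O), Sat ⟨I, A⟩ (.atom P vars) w ↔ w = q := by
  classical
  refine ⟨update (fun _ => ∅) P {q ∘ vars}, fun A w => ?_⟩
  simp only [Sat, update_self, Set.mem_singleton_iff]
  exact hvars.injective_comp_right.eq_iff

section Correspondence

variable [DecidableEq V]

theorem stepwise_valid_of_hasStepwiseMerge {A : Set (V → O)} (hA : HasStepwiseMerge A)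
    (I : (P : Pred) → Set (Fin (ar P) → O)) (X Y : Finset V) (φ : Formula V Pred ar)
    {s : V → O} (hs : s ∈ A) :
    Sat (⟨I, A⟩ : DepModel V Pred ar O) (impl (diam (X ∩ Y) φ) (diam X (diam Y φ))) s := by
  simp only [sat_impl, sat_diam]
  rintro ⟨t, ht, hst, hφt⟩
  obtain ⟨v, hv, hsv, hvt⟩ := hA X Y s hs t ht hst
  exact ⟨v, hv, hsv, t, ht, hvt, hφt⟩

theorem hasStepwiseMerge_of_stepwise_valid {A : Set (V → O)} {P : Pred}
    {vars : Fin (ar P) → V} (hvars : Surjective vars)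
    (hvalid : ∀ (I : (P : Pred) → Set (Fin (ar P) → O)) (X Y : Finset V)
      (φ : Formula V Pred ar), ∀ s ∈ A,
      Sat (⟨I, A⟩ : DepModel V Pred ar O) (impl (diam (X ∩ Y) φ) (diam X (diam Y φ))) s) :
    HasStepwiseMerge A := by
  intro X Y p hp q hq hpq
  obtain ⟨I, hI⟩ := exists_interp_sat_atom_iff_eq hvars q
  have hstep := hvalid I X Y (.atom P vars) p hp
  simp only [sat_impl, sat_diam, hI] at hstep
  obtain ⟨v, hv, hpv, _, _, hvq, rfl⟩ := hstep ⟨q, hq, hpq, rfl⟩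
  exact ⟨v, hv, hpv, hvq⟩

theorem IsPatchClosed.hasStepwiseMerge {A : Set (V → O)} (hA : IsPatchClosed A) :
    HasStepwiseMerge A := by
  intro X Y p hp q hq hpq
  refine ⟨_, hA (fun a => if a ∈ X then p else q) (fun a => by split <;> assumption),
    fun a ha => by simp [Finset.mem_coe.mp ha], fun a ha => ?_⟩
  by_cases haX : a ∈ X
  · simpa [haX] using hpq a (by simp [haX, ha])
  · simp [haX]

end Correspondence

section ThreeVariables

variable {x y z : V}

theorem isPatchClosed_of_forall_exists_mem {A : Set (V → O)}
    (hV : ∀ v : V, v = x ∨ v = y ∨ v = z)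
    (hA : ∀ s ∈ A, ∀ t ∈ A, ∀ u ∈ A, ∃ v ∈ A, v x = s x ∧ v y = t y ∧ v z = u z) :
    IsPatchClosed A := by
  intro c hc
  obtain ⟨v, hv, hvx, hvy, hvz⟩ := hA (c x) (hc x) (c y) (hc y) (c z) (hc z)
  convert hv using 1
  funext a
  rcases hV a with rfl | rfl | rfl <;> symm <;> assumption

theorem HasStepwiseMerge.exists_mem [DecidableEq V] {A : Set (V → O)}
    (hxy : x ≠ y) (hxz : x ≠ z) (hyz : y ≠ z) (hA : HasStepwiseMerge A) :
    ∀ s ∈ A, ∀ t ∈ A, ∀ u ∈ A, ∃ v ∈ A, v x = s x ∧ v y = t y ∧ v z = u z := by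
  intro s hs t ht u hu
  obtain ⟨w, hw, hsw, hwt⟩ := hA {x} {y, z} s hs t ht (by simp [agree, hxy, hxz])
  obtain ⟨v, hv, hwv, hvu⟩ := hA {x, y} {z} w hw u hu (by simp [agree, hxz, hyz])
  refine ⟨v, hv, ?_, ?_, hvu z (by simp)⟩
  · rw [← hwv x (by simp), hsw x (by simp)]
  · rw [← hwv y (by simp), hwt y (by simp)]

end ThreeVariables

/-- Frame correspondence for the Stepwise axiom: over the set `V = {x, y, z}` of three
distinct variables (with at least one ternary predicate in the vocabulary), a dependence
frame `(O, A)` makes every instance of the Stepwise schema `◇_{X∩Y} φ → ◇_X ◇_Y φ` true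
at every assignment under every interpretation of the predicate symbols iff `A` is a
full Cartesian product of the value ranges of the variables. -/
theorem stmt18 {V Pred : Type} [DecidableEq V] {ar : Pred → ℕ}
    (x y z : V) (hxy : x ≠ y) (hxz : x ≠ z) (hyz : y ≠ z)
    (hV : ∀ v : V, v = x ∨ v = y ∨ v = z)
    (P₀ : Pred) (hP₀ : ar P₀ = 3)
    (O : Type) (A : Set (V → O)) :
    (∀ (I : (P : Pred) → Set (Fin (ar P) → O)) (X Y : Finset V)
        (φ : Formula V Pred ar), ∀ s ∈ A,
        Sat (⟨I, A⟩ : DepModel V Pred ar O)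
          (impl (diam (X ∩ Y) φ) (diam X (diam Y φ))) s) ↔
    (∀ s ∈ A, ∀ t ∈ A, ∀ u ∈ A,
      ∃ v ∈ A, v x = s x ∧ v y = t y ∧ v z = u z) := by
  have hvars : Surjective fun i : Fin (ar P₀) => ![x, y, z] (Fin.cast hP₀ i) := by
    refine Surjective.comp (fun a => ?_) (finCongr hP₀).surjective
    rcases hV a with rfl | rfl | rfl
    exacts [⟨0, rfl⟩, ⟨1, rfl⟩, ⟨2, rfl⟩]
  refine ⟨fun hvalid => ?_, fun hA => ?_⟩
  · exact (hasStepwiseMerge_of_stepwise_valid hvars hvalid).exists_mem hxy hxz hyz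
  · exact fun I X Y φ s hs => stepwise_valid_of_hasStepwiseMerge
      (isPatchClosed_of_forall_exists_mem hV hA).hasStepwiseMerge I X Y φ hs

end LFD
end
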